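/- Let 𝒱 ⊂ ℝ³ be the set of the N = 4 vertices of the regular tetrahedron: 𝒱 = {(1,1,1), (1,−1,−1), (−1,1,−1), (−1,−1,1)}. Then max_{v ∈ 𝒱^N̲} |⟨v⟩|₂² = 80. Consequently, for the unit-normalized ensemble 𝒱/√3 one has g = 80/3, and its minimum guesswork is (1/2)·(5 − √(80/3)/4) ≈ 1.8545. -/

import Mathlib

open Pointwise

noncomputable section

abbrev E3 := EuclideanSpace ℝ (Fin 3)

/-- The vector `(a, b, c)` in ℝ³ with the Euclidean norm. -/
def vec3 (a b c : ℝ) : E3 := (WithLp.equiv 2 (Fin 3 → ℝ)).symm ![a, b, c]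

/-- `⟨v⟩ := Σ_{i=1}^N (2i − N + 1)·vᵢ` (here `i : Fin N` is 0-based, so the
coefficient reads `2(i+1) − N + 1 = 2i + 3 − N`). -/
def tupleAvg (N : ℕ) (v : Fin N → E3) : E3 :=
  ∑ i : Fin N, (2 * (i : ℝ) + 3 - N) • v i

/-- The set of values `|⟨v⟩|₂²` as `v` ranges over the `N`-tuples on `𝒱` without
repetition (i.e. bijective enumerations of `𝒱`). -/
def normSqSet (𝒱 : Set E3) (N : ℕ) : Set ℝ :=
  {x | ∃ v : Fin N → E3, Function.Injective v ∧ Set.range v = 𝒱 ∧ x = ‖tupleAvg N v‖ ^ 2}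

/-- The vertices of the regular tetrahedron. -/
def tetrahedron : Set E3 :=
  {vec3 1 1 1, vec3 1 (-1) (-1), vec3 (-1) 1 (-1), vec3 (-1) (-1) 1}

lemma vec3_add (a b c d e f : ℝ) : vec3 a b c + vec3 d e f = vec3 (a+d) (b+e) (c+f) := by
  ext i; fin_cases i <;> simp [vec3]

lemma vec3_smul (r a b c : ℝ) : r • vec3 a b c = vec3 (r*a) (r*b) (r*c) := by
  ext i; fin_cases i <;> simp [vec3]

lemma vec3_normSq (a b c : ℝ) : ‖vec3 a b c‖^2 = a^2+b^2+c^2 := by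
  rw [EuclideanSpace.norm_eq, Real.sq_sqrt (by positivity)]
  simp [vec3, Fin.sum_univ_three, sq_abs]

lemma vec3_inj {a b c d e f : ℝ} (h : vec3 a b c = vec3 d e f) : a=d ∧ b=e ∧ c=f :=
  ⟨congrArg (fun x : E3 => x 0) h, congrArg (fun x : E3 => x 1) h, congrArg (fun x : E3 => x 2) h⟩

lemma tupleAvg_four (v : Fin 4 → E3) :
    tupleAvg 4 v = (-1 : ℝ) • v 0 + (1:ℝ) • v 1 + (3:ℝ) • v 2 + (5:ℝ) • v 3 := by
  rw [tupleAvg, Fin.sum_univ_four]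
  norm_num [show ((0:Fin 4).val)=0 from rfl, show ((1:Fin 4).val)=1 from rfl,
    show ((2:Fin 4).val)=2 from rfl, show ((3:Fin 4).val)=3 from rfl]

set_option maxHeartbeats 2000000 in
lemma key (v : Fin 4 → E3) (hinj : Function.Injective v)
    (hr : Set.range v = tetrahedron) : ‖tupleAvg 4 v‖^2 = 80 := by
  have h0 : v 0 ∈ tetrahedron := hr ▸ Set.mem_range_self 0
  have h1 : v 1 ∈ tetrahedron := hr ▸ Set.mem_range_self 1
  have h2 : v 2 ∈ tetrahedron := hr ▸ Set.mem_range_self 2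
  have h3 : v 3 ∈ tetrahedron := hr ▸ Set.mem_range_self 3
  simp only [tetrahedron, Set.mem_insert_iff, Set.mem_singleton_iff] at h0 h1 h2 h3
  rcases h0 with h0|h0|h0|h0 <;> rcases h1 with h1|h1|h1|h1 <;>
    rcases h2 with h2|h2|h2|h2 <;> rcases h3 with h3|h3|h3|h3 <;>
  first
  | exact absurd (hinj (h0.trans h1.symm)) (by decide)
  | exact absurd (hinj (h0.trans h2.symm)) (by decide)
  | exact absurd (hinj (h0.trans h3.symm)) (by decide)
  | exact absurd (hinj (h1.trans h2.symm)) (by decide)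
  | exact absurd (hinj (h1.trans h3.symm)) (by decide)
  | exact absurd (hinj (h2.trans h3.symm)) (by decide)
  | (rw [tupleAvg_four, h0, h1, h2, h3, vec3_smul, vec3_smul, vec3_smul, vec3_smul,
        vec3_add, vec3_add, vec3_add, vec3_normSq]; norm_num)

/-- The standard enumeration of the tetrahedron. -/
def tet4 : Fin 4 → E3 := ![vec3 1 1 1, vec3 1 (-1) (-1), vec3 (-1) 1 (-1), vec3 (-1) (-1) 1]

lemma tet4_inj : Function.Injective tet4 := by
  intro i j hij
  fin_cases i <;> fin_cases j <;>
    first | rfl | (exfalso; have := vec3_inj hij; norm_num at this)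

lemma tet4_range : Set.range tet4 = tetrahedron := by
  ext x
  simp only [tet4, Matrix.range_cons, Matrix.range_empty, tetrahedron, Set.union_empty,
    Set.union_singleton, Set.mem_insert_iff, Set.mem_singleton_iff, Set.singleton_union,
    Set.mem_union]
  tauto

lemma range_smul_comp (f : Fin 4 → E3) (c : ℝ) :
    Set.range (fun i => c • f i) = c • Set.range f := by
  ext x
  simp only [Set.mem_range, Set.mem_smul_set]
  constructor
  · rintro ⟨i, rfl⟩; exact ⟨f i, ⟨i, rfl⟩, rfl⟩
  · rintro ⟨y, ⟨i, rfl⟩, rfl⟩; exact ⟨i, rfl⟩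

lemma tupleAvg_smul (c : ℝ) (v : Fin 4 → E3) :
    tupleAvg 4 (fun i => c • v i) = c • tupleAvg 4 v := by
  simp only [tupleAvg, Finset.smul_sum]
  exact Finset.sum_congr rfl fun i _ => smul_comm _ _ _

lemma sqrt3_ne : (Real.sqrt 3) ≠ 0 := by positivity

lemma inv_sqrt3_sq : ((Real.sqrt 3)⁻¹)^2 = 1/3 := by
  rw [inv_pow, Real.sq_sqrt (by norm_num : (3:ℝ) ≥ 0)]
  norm_num

/-- Every enumeration of the scaled tetrahedron gives `80/3`. -/
lemma key' (v : Fin 4 → E3) (hinj : Function.Injective v)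
    (hr : Set.range v = (Real.sqrt 3)⁻¹ • tetrahedron) : ‖tupleAvg 4 v‖^2 = 80/3 := by
  set c : ℝ := (Real.sqrt 3)⁻¹ with hc
  have hcne : c ≠ 0 := inv_ne_zero sqrt3_ne
  set w : Fin 4 → E3 := fun i => Real.sqrt 3 • v i with hw
  have hwinj : Function.Injective w := fun i j h =>
    hinj (smul_right_injective E3 sqrt3_ne h)
  have hwr : Set.range w = tetrahedron := by
    rw [hw, range_smul_comp, hr, smul_inv_smul₀ sqrt3_ne]
  have hv : v = fun i => c • w i := by
    funext i
    rw [hw]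
    simp only [hc]
    rw [inv_smul_smul₀ sqrt3_ne]
  have h80 := key w hwinj hwr
  rw [hv, tupleAvg_smul, norm_smul, mul_pow, Real.norm_eq_abs, sq_abs, h80, hc, inv_sqrt3_sq]
  norm_num

theorem tetrahedron_guesswork :
    IsGreatest (normSqSet tetrahedron 4) 80 ∧
    IsGreatest (normSqSet ((Real.sqrt 3)⁻¹ • tetrahedron) 4) (80 / 3) ∧
    |(1 / 2 : ℝ) * (4 + 1 - Real.sqrt (80 / 3) / 4) - 1.8545| < 0.0001 := by
  refine ⟨⟨⟨tet4, tet4_inj, tet4_range, (key tet4 tet4_inj tet4_range).symm⟩, ?_⟩,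
    ⟨⟨fun i => (Real.sqrt 3)⁻¹ • tet4 i, ?_, ?_, ?_⟩, ?_⟩, ?_⟩
  · rintro x ⟨v, hinj, hr, rfl⟩
    exact (key v hinj hr).le
  · exact fun i j h => tet4_inj (smul_right_injective E3 (inv_ne_zero sqrt3_ne) h)
  · rw [range_smul_comp, tet4_range]
  · refine (key' _ (fun i j h => tet4_inj (smul_right_injective E3 (inv_ne_zero sqrt3_ne) h)) ?_).symm
    rw [range_smul_comp, tet4_range]
  · rintro x ⟨v, hinj, hr, rfl⟩
    exact (key' v hinj hr).le
  · have hs := Real.sq_sqrt (by norm_num : (80/3:ℝ) ≥ 0)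
    have hn := Real.sqrt_nonneg (80/3 : ℝ)
    rw [abs_lt]
    constructor <;> nlinarith [sq_nonneg (Real.sqrt (80/3) - 5.164), sq_nonneg (Real.sqrt (80/3) - 5.1639)]
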